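/- arXiv:1703.09401 — 5 statements merged into one kernel-verified Lean document; each statement's English description precedes it below -/
import Mathlib

section
/- Let H be the diagonal matrix of size 2^m with entries H_{I,I} as in the Lauricella F_C intersection matrix, P_m the Kronecker product of the matrices Q_k = [[1-γ_k,1],[0,1]], and let H̃ = ᵗP_m · H · P_m^∨ where P_m^∨ is P_m with each γ_k replaced by γ_k^{-1}. Then det(H̃) = ∏_{I∈{0,1}^m}(α - ∏_k γ_k^{i_k})(β - ∏_k γ_k^{i_k}) / ((α - ∏_k γ_k)^{2^m} (β-1)^{2^m}). In particular, H̃ is invertible under the condition that α - ∏_k γ_k^{i_k} ≠ 0 and β - ∏_k γ_k^{i_k} ≠ 0 for all I. -/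
open Matrix

/-- The diagonal entry `H_{I,I}` of the intersection matrix for Lauricella's `F_C`. -/
noncomputable def Hentry (m : ℕ) (α β : ℂ) (γ : Fin m → ℂ) (I : Fin m → Fin 2) : ℂ :=
  (∏ k, (-1 : ℂ) ^ (I k : ℕ) * γ k ^ (1 - (I k : ℕ)) / (γ k - 1)) *
    ((α - ∏ k, γ k ^ (I k : ℕ)) * (β - ∏ k, γ k ^ (I k : ℕ)) /
      ((α - ∏ k, γ k) * (β - 1)))

/-- The Kronecker product `P_m = Q_1 ⊗ ⋯ ⊗ Q_m` with `Q_k = [[1-γ_k,1],[0,1]]`,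
realized entrywise on the index type `Fin m → Fin 2`. -/
def Pmat (m : ℕ) (γ : Fin m → ℂ) : Matrix (Fin m → Fin 2) (Fin m → Fin 2) ℂ :=
  Matrix.of fun I J => ∏ k, (!![1 - γ k, 1; 0, 1] : Matrix (Fin 2) (Fin 2) ℂ) (I k) (J k)

/-!
Since `det H̃ = det P_m · ∏_I H_{I,I} · det P_m^∨`, everything reduces to scalar products.
`P_m` is a Kronecker product of the triangular `Q_k`, so `det P_m = ∏_k (1 - γ_k)^{2^{m-1}}`.
The `γ`-prefactor of `H_{I,I}` is a product over `k` of a factor depending only on `i_k`,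
so its product over all `I` is `∏_k (-γ_k / (γ_k - 1)²)^{2^{m-1}}`. Since
`(1 - γ_k) · (-γ_k / (γ_k - 1)²) · (1 - γ_k⁻¹) = 1`, only the `(α, β)`-part of `H` survives.
-/

open Kronecker Finset

theorem Fintype.prod_pi_prod_apply {ι κ M : Type*} [Fintype ι] [DecidableEq ι] [Fintype κ]
    [CommMonoid M] (f : ι → κ → M) :
    ∏ I : ι → κ, ∏ k, f k (I k) = ∏ k, (∏ j, f k j) ^ (card κ ^ (card ι - 1)) := by
  rw [prod_comm]
  refine Finset.prod_congr rfl fun k _ => ?_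
  rw [← prod_equiv (Equiv.funSplitAt k κ).symm _ _ (fun _ => rfl), prod_prod_type, ← prod_pow]
  simp [card_subtype_compl]

def kroneckerPi {ι n R : Type*} [Fintype ι] [CommMonoid R] (A : ι → Matrix n n R) :
    Matrix (ι → n) (ι → n) R :=
  of fun I J => ∏ k, A k (I k) (J k)

theorem kroneckerPi_fin_succ {n R : Type*} [CommMonoid R] {m : ℕ}
    (A : Fin (m + 1) → Matrix n n R) :
    kroneckerPi A = (A 0 ⊗ₖ kroneckerPi fun k => A k.succ).submatrix
      (Fin.consEquiv fun _ => n).symm (Fin.consEquiv fun _ => n).symm := by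
  ext I J
  simp only [kroneckerPi, Fin.prod_univ_succ, of_apply, Fin.consEquiv, Equiv.symm_mk,
    Equiv.coe_fn_mk, submatrix_apply, kroneckerMap_apply]
  rfl

theorem det_kroneckerPi {n R : Type*} [Fintype n] [DecidableEq n] [CommRing R] {m : ℕ}
    (A : Fin m → Matrix n n R) :
    (kroneckerPi A).det = ∏ k, (A k).det ^ (Fintype.card n ^ (m - 1)) := by
  induction m with
  | zero => simp [kroneckerPi, det_unique]
  | succ m ih =>
    rw [kroneckerPi_fin_succ, det_submatrix_equiv_self, det_kronecker, ih, Fin.prod_univ_succ,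
      ← prod_pow]
    simp only [Fintype.card_pi, prod_const, card_univ, Fintype.card_fin, add_tsub_cancel_right]
    congr 1
    refine prod_congr rfl fun k _ => ?_
    rw [← pow_mul, ← pow_succ, Nat.sub_add_cancel k.pos]

theorem det_Pmat (m : ℕ) (γ : Fin m → ℂ) : (Pmat m γ).det = ∏ k, (1 - γ k) ^ 2 ^ (m - 1) := by
  rw [show Pmat m γ = kroneckerPi fun k => !![1 - γ k, 1; 0, 1] from rfl, det_kroneckerPi]
  simp [det_fin_two_of]

theorem prod_Hentry (m : ℕ) (α β : ℂ) (γ : Fin m → ℂ) :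
    ∏ I, Hentry m α β γ I = (∏ k, (-γ k / (γ k - 1) ^ 2) ^ 2 ^ (m - 1)) *
      ((∏ I : Fin m → Fin 2, (α - ∏ k, γ k ^ (I k : ℕ)) * (β - ∏ k, γ k ^ (I k : ℕ))) /
        ((α - ∏ k, γ k) ^ 2 ^ m * (β - 1) ^ 2 ^ m)) := by
  unfold Hentry
  rw [prod_mul_distrib, prod_div_distrib, prod_const, card_univ, Fintype.card_fun,
    Fintype.card_fin, Fintype.card_fin, mul_pow,
    Fintype.prod_pi_prod_apply fun k (i : Fin 2) =>
      (-1 : ℂ) ^ (i : ℕ) * γ k ^ (1 - (i : ℕ)) / (γ k - 1)]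
  congr 1
  refine prod_congr rfl fun k _ => ?_
  simp [Fin.prod_univ_two]

theorem det_Pmat_mul_mul_det_Pmat_inv {m : ℕ} {γ : Fin m → ℂ} (hγ0 : ∀ k, γ k ≠ 0)
    (hγ1 : ∀ k, γ k ≠ 1) (X : ℂ) :
    (Pmat m γ).det * ((∏ k, (-γ k / (γ k - 1) ^ 2) ^ 2 ^ (m - 1)) * X) *
      (Pmat m fun k => (γ k)⁻¹).det = X := by
  suffices h : (Pmat m γ).det * (∏ k, (-γ k / (γ k - 1) ^ 2) ^ 2 ^ (m - 1)) *
      (Pmat m fun k => (γ k)⁻¹).det = 1 by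
    linear_combination X * h
  rw [det_Pmat, det_Pmat, ← prod_mul_distrib, ← prod_mul_distrib]
  refine prod_eq_one fun k _ => ?_
  have hk : (1 - γ k) * (-γ k / (γ k - 1) ^ 2) * (1 - (γ k)⁻¹) = 1 := by
    have := hγ0 k
    have := sub_ne_zero.mpr (hγ1 k)
    field_simp
    ring
  rw [← mul_pow, ← mul_pow, hk, one_pow]

/-- `det(H̃)` for `H̃ = ᵗP_m · H · P_m^∨` (where `∨` replaces each `γ_k` by `γ_k⁻¹`)
equals `∏_I (α-∏γ^i)(β-∏γ^i) / ((α-∏γ)^{2^m}(β-1)^{2^m})`; in particular `H̃`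
is invertible. -/
theorem detHtilde (m : ℕ) (α β : ℂ) (γ : Fin m → ℂ)
    (hγ0 : ∀ k, γ k ≠ 0) (hγ1 : ∀ k, γ k ≠ 1)
    (hα : ∀ i : Fin m → Fin 2, α ≠ ∏ k, γ k ^ (i k : ℕ))
    (hβ : ∀ i : Fin m → Fin 2, β ≠ ∏ k, γ k ^ (i k : ℕ)) :
    ((Pmat m γ)ᵀ * Matrix.diagonal (Hentry m α β γ) * Pmat m (fun k => (γ k)⁻¹)).det
        = (∏ I : Fin m → Fin 2,
            (α - ∏ k, γ k ^ (I k : ℕ)) * (β - ∏ k, γ k ^ (I k : ℕ))) /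
          ((α - ∏ k, γ k) ^ 2 ^ m * (β - 1) ^ 2 ^ m) ∧
      IsUnit ((Pmat m γ)ᵀ * Matrix.diagonal (Hentry m α β γ) *
        Pmat m (fun k => (γ k)⁻¹)) := by
  have hdet : ((Pmat m γ)ᵀ * diagonal (Hentry m α β γ) * Pmat m fun k => (γ k)⁻¹).det =
      (∏ I : Fin m → Fin 2, (α - ∏ k, γ k ^ (I k : ℕ)) * (β - ∏ k, γ k ^ (I k : ℕ))) /
        ((α - ∏ k, γ k) ^ 2 ^ m * (β - 1) ^ 2 ^ m) := by
    rw [det_mul, det_mul, det_transpose, det_diagonal, prod_Hentry,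
      det_Pmat_mul_mul_det_Pmat_inv hγ0 hγ1]
  have hαγ : α - ∏ k, γ k ≠ 0 := sub_ne_zero.mpr (by simpa using hα 1)
  have hβ1 : β - 1 ≠ 0 := sub_ne_zero.mpr (by simpa using hβ 0)
  refine ⟨hdet, (isUnit_iff_isUnit_det _).mpr (hdet ▸ (div_ne_zero ?_ ?_).isUnit)⟩
  · exact prod_ne_zero_iff.mpr fun I _ =>
      mul_ne_zero (sub_ne_zero.mpr (hα I)) (sub_ne_zero.mpr (hβ I))
  · exact mul_ne_zero (pow_ne_zero _ hαγ) (pow_ne_zero _ hβ1)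
end

section
/- For the Kronecker-product diagonal matrices M_k = E_2 ⊗ ⋯ ⊗ G_k ⊗ ⋯ ⊗ E_2 (G_k = diag(1, γ_k^{-1}) in the k-th slot) and the all-ones vector 𝟙 of size 2^m, the 2^m vectors M_1^{i_1} M_2^{i_2} ⋯ M_m^{i_m} 𝟙 for (i_1,…,i_m) ∈ {0,1}^m are linearly independent, provided γ_k ≠ 1 for all k. -/
/-!
Every vector `M_1^{i_1} ⋯ M_m^{i_m} 𝟙` has `J`-entry `∏ k, (γ_k^{-J_k})^{I_k}`, so these vectors are
the columns of the Kronecker product of the `2 × 2` Vandermonde matrices of the nodes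
`1, γ_k⁻¹`. Kronecker products of matrices are multiplicative, hence preserve invertibility, and
each Vandermonde factor is invertible because `γ_k⁻¹ ≠ 1`.
-/

open Matrix

namespace Matrix

variable {R : Type*} [CommSemiring R]

theorem list_prod_ofFn_diagonal_pow {n : Type*} [Fintype n] [DecidableEq n] {m : ℕ}
    (d : Fin m → n → R) (e : Fin m → ℕ) :
    (List.ofFn fun k => diagonal (d k) ^ e k).prod = diagonal fun J => ∏ k, d k J ^ e k := by
  have hmap : (List.ofFn fun k => diagonal (d k) ^ e k) =
      (List.ofFn fun k => d k ^ e k).map (diagonalRingHom n R) := by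
    simp [List.map_ofFn, Function.comp_def, diagonal_pow]
  rw [hmap, ← map_list_prod, List.prod_ofFn]
  simp [Finset.prod_apply]

section PiKronecker

variable {ι : Type*} [Fintype ι] {κ : ι → Type*}

def piKronecker (A : ∀ k, Matrix (κ k) (κ k) R) : Matrix (∀ k, κ k) (∀ k, κ k) R :=
  of fun I J => ∏ k, A k (I k) (J k)

theorem piKronecker_one [∀ k, DecidableEq (κ k)] :
    piKronecker (1 : ∀ k, Matrix (κ k) (κ k) R) = 1 := by
  ext I J
  simp [piKronecker, one_apply, Finset.prod_boole, funext_iff]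

theorem piKronecker_mul [DecidableEq ι] [∀ k, Fintype (κ k)]
    (A B : ∀ k, Matrix (κ k) (κ k) R) :
    piKronecker A * piKronecker B = piKronecker (A * B) := by
  ext I L
  simp [piKronecker, mul_apply, Fintype.prod_sum, Finset.prod_mul_distrib]

variable [DecidableEq ι] [∀ k, Fintype (κ k)] [∀ k, DecidableEq (κ k)]

def piKroneckerHom : (∀ k, Matrix (κ k) (κ k) R) →* Matrix (∀ k, κ k) (∀ k, κ k) R where
  toFun := piKronecker
  map_one' := piKronecker_one
  map_mul' A B := (piKronecker_mul A B).symm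

theorem isUnit_piKronecker {A : ∀ k, Matrix (κ k) (κ k) R} (hA : ∀ k, IsUnit (A k)) :
    IsUnit (piKronecker A) :=
  (Pi.isUnit_iff.mpr hA).map piKroneckerHom

end PiKronecker

theorem isUnit_vandermonde_pow_fin_two {K : Type*} [Field K] {a : K} (ha : a ≠ 1) :
    IsUnit (vandermonde fun i : Fin 2 => a ^ (i : ℕ)) := by
  rw [isUnit_iff_isUnit_det, isUnit_iff_ne_zero, det_vandermonde_ne_zero_iff]
  intro i j
  fin_cases i <;> fin_cases j <;> simp [ha, Ne.symm ha]

end Matrix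

theorem lin_indep_general {K : Type*} [Field K] (m : ℕ) (γ : Fin m → K)
    (h1 : ∀ k, γ k ≠ 1) :
    LinearIndependent K (fun I : Fin m → Fin 2 =>
      (List.ofFn fun k =>
          (Matrix.diagonal fun J : Fin m → Fin 2 => ((γ k)⁻¹) ^ (J k : ℕ)) ^ (I k : ℕ)).prod
        *ᵥ fun _ => (1 : K)) := by
  let V : Fin m → Matrix (Fin 2) (Fin 2) K := fun k => vandermonde fun i => (γ k)⁻¹ ^ (i : ℕ)
  have hcols : (fun I : Fin m → Fin 2 =>
      (List.ofFn fun k =>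
          (Matrix.diagonal fun J : Fin m → Fin 2 => ((γ k)⁻¹) ^ (J k : ℕ)) ^ (I k : ℕ)).prod
        *ᵥ fun _ => (1 : K)) = (piKronecker V).col := by
    funext I J
    simp [list_prod_ofFn_diagonal_pow, mulVec_diagonal, piKronecker, V]
  rw [hcols, linearIndependent_cols_iff_isUnit]
  exact isUnit_piKronecker fun k => isUnit_vandermonde_pow_fin_two (inv_ne_one.mpr (h1 k))

/-- The `2^m` vectors `M_1^{i_1} ⋯ M_m^{i_m} 𝟙`, where `M_k` is the diagonal matrix
with `(I,I)`-entry `γ_k^{-i_k}` and `𝟙` is the all-ones vector, are linearly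
independent when all `γ_k ≠ 0, 1`. -/
theorem lin_indep {K : Type*} [Field K] (m : ℕ) (γ : Fin m → K)
    (h0 : ∀ k, γ k ≠ 0) (h1 : ∀ k, γ k ≠ 1) :
    LinearIndependent K (fun I : Fin m → Fin 2 =>
      (List.ofFn fun k =>
          (Matrix.diagonal fun J : Fin m → Fin 2 => ((γ k)⁻¹) ^ (J k : ℕ)) ^ (I k : ℕ)).prod
        *ᵥ fun _ => (1 : K)) :=
  lin_indep_general m γ h1
end

section
/- Let M_0 = E - c · 𝟙 · ᵗ𝟙 · H where H is an invertible diagonal matrix, 𝟙 the all-ones vector, c a scalar with c · (ᵗ𝟙 H 𝟙) = 1 - λ and λ ≠ 1, λ ≠ 0. Then 𝟙 is an eigenvector of M_0 with eigenvalue λ, and the eigenspace of M_0 with eigenvalue 1 is { w : ᵗ𝟙 H w = 0 }, which has dimension 2^m - 1. -/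
open Matrix

/-- `M_0 = E - c · 𝟙 ᵗ𝟙 H` for an invertible diagonal `H` of size `2^m`. -/
noncomputable def M0mat (m : ℕ) (c : ℂ) (d : Fin (2 ^ m) → ℂ) :
    Matrix (Fin (2 ^ m)) (Fin (2 ^ m)) ℂ :=
  1 - c • (Matrix.vecMulVec (fun _ => 1) (fun _ => 1) * Matrix.diagonal d)

/-! `M₀ = 1 - u ᵗv` with `u = c 𝟙` and `v = H 𝟙` is a rank-one update of the identity, so
`M₀ w = w - (ᵗv w) u`. Hence `𝟙` is mapped to `(1 - c ᵗ𝟙 H 𝟙) 𝟙`, and since `c ≠ 0` (as `λ ≠ 1`)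
the fixed vectors of `M₀` form the kernel of the linear form `w ↦ ᵗv w`, which is nonzero because
`ᵗv 𝟙 ≠ 0`, so has codimension one. -/

section RankOneUpdate

variable {R K ι : Type*} [CommRing R] [Field K] [Fintype ι] [DecidableEq ι]

theorem Matrix.one_sub_vecMulVec_mulVec (u v w : ι → R) :
    (1 - vecMulVec u v) *ᵥ w = w - (v ⬝ᵥ w) • u := by
  rw [sub_mulVec, one_mulVec, vecMulVec_mulVec, op_smul_eq_smul]

theorem Matrix.const_one_dotProduct_diagonal_mulVec (d w : ι → R) :
    (fun _ => 1) ⬝ᵥ (diagonal d *ᵥ w) = d ⬝ᵥ w := by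
  simp [dotProduct, mulVec_diagonal]

theorem Matrix.one_sub_vecMulVec_mulVec_eq_self_iff {u v w : ι → K} (hu : u ≠ 0) :
    (1 - vecMulVec u v) *ᵥ w = w ↔ v ⬝ᵥ w = 0 := by
  rw [one_sub_vecMulVec_mulVec, sub_eq_self, smul_eq_zero, or_iff_left hu]

theorem Matrix.ker_one_sub_vecMulVec_sub_one {u v : ι → K} (hu : u ≠ 0) :
    LinearMap.ker (1 - vecMulVec u v - 1).mulVecLin = LinearMap.ker (dotProductBilin K K v) := by
  ext w
  simp only [LinearMap.mem_ker, mulVecLin_apply, sub_mulVec, one_mulVec, sub_eq_zero,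
    ← one_sub_vecMulVec_mulVec_eq_self_iff hu (v := v), dotProductBilin_apply_apply]

theorem Matrix.finrank_ker_one_sub_vecMulVec_sub_one {u v : ι → K} (hu : u ≠ 0) (hv : v ≠ 0) :
    Module.finrank K (LinearMap.ker (1 - vecMulVec u v - 1).mulVecLin) = Fintype.card ι - 1 := by
  have hf : dotProductBilin K K v ≠ 0 := fun h => hv <| by
    ext i
    simpa using LinearMap.congr_fun h (Pi.single i 1)
  rw [ker_one_sub_vecMulVec_sub_one hu, ← Module.finrank_fintype_fun_eq_card K,
    ← Module.Dual.finrank_ker_add_one_of_ne_zero hf, Nat.add_sub_cancel]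

end RankOneUpdate

theorem M0mat_eq_one_sub_vecMulVec (m : ℕ) (c : ℂ) (d : Fin (2 ^ m) → ℂ) :
    M0mat m c d = 1 - vecMulVec (fun _ => c) d := by
  ext i j
  simp [M0mat, vecMulVec_mul, vecMulVec_apply, vecMul_diagonal]

theorem M0_eigen_general (m : ℕ) (c lam : ℂ) (d : Fin (2 ^ m) → ℂ)
    (hsum : dotProduct (fun _ => (1 : ℂ)) (Matrix.diagonal d *ᵥ fun _ => 1) ≠ 0)
    (hlam : lam = 1 - c * dotProduct (fun _ => (1 : ℂ))
      (Matrix.diagonal d *ᵥ fun _ => 1))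
    (hlam1 : lam ≠ 1) :
    (M0mat m c d *ᵥ fun _ => (1 : ℂ)) = lam • (fun _ => (1 : ℂ)) ∧
      {w : Fin (2 ^ m) → ℂ | M0mat m c d *ᵥ w = w}
        = {w | dotProduct (fun _ => (1 : ℂ)) (Matrix.diagonal d *ᵥ w) = 0} ∧
      Module.finrank ℂ (LinearMap.ker (M0mat m c d - 1).mulVecLin) = 2 ^ m - 1 := by
  simp only [const_one_dotProduct_diagonal_mulVec] at hsum hlam ⊢
  have hu : (fun _ => c) ≠ (0 : Fin (2 ^ m) → ℂ) := by
    intro h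
    refine hlam1 ?_
    simp [hlam, congrFun h ⟨0, by positivity⟩]
  have hv : d ≠ 0 := by
    rintro rfl
    simp at hsum
  rw [M0mat_eq_one_sub_vecMulVec]
  refine ⟨?_, ?_, ?_⟩
  · ext i
    simp [one_sub_vecMulVec_mulVec, hlam, mul_comm]
  · ext w
    exact one_sub_vecMulVec_mulVec_eq_self_iff hu
  · rw [finrank_ker_one_sub_vecMulVec_sub_one hu hv, Fintype.card_fin]

/-- For `M_0 = E - c·𝟙·ᵗ𝟙·H` with `H` invertible diagonal, `ᵗ𝟙 H 𝟙 ≠ 0`,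
`λ = 1 - c·(ᵗ𝟙 H 𝟙)`, `λ ≠ 0, 1`: `𝟙` is an eigenvector of `M_0` with eigenvalue `λ`,
the 1-eigenspace of `M_0` is `{w | ᵗ𝟙 H w = 0}`, and it has dimension `2^m - 1`. -/
theorem M0_eigen (m : ℕ) (c lam : ℂ) (d : Fin (2 ^ m) → ℂ) (hd : ∀ i, d i ≠ 0)
    (hsum : dotProduct (fun _ => (1 : ℂ)) (Matrix.diagonal d *ᵥ fun _ => 1) ≠ 0)
    (hlam : lam = 1 - c * dotProduct (fun _ => (1 : ℂ))
      (Matrix.diagonal d *ᵥ fun _ => 1))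
    (hlam1 : lam ≠ 1) (hlam0 : lam ≠ 0) :
    (M0mat m c d *ᵥ fun _ => (1 : ℂ)) = lam • (fun _ => (1 : ℂ)) ∧
      {w : Fin (2 ^ m) → ℂ | M0mat m c d *ᵥ w = w}
        = {w | dotProduct (fun _ => (1 : ℂ)) (Matrix.diagonal d *ᵥ w) = 0} ∧
      Module.finrank ℂ (LinearMap.ker (M0mat m c d - 1).mulVecLin) = 2 ^ m - 1 :=
  M0_eigen_general m c lam d hsum hlam hlam1
end

section
/- Irreducibility criterion: Let V = ℂ^n, let M_0, M_1, …, M_m be invertible linear maps on V, and H an invertible bilinear-form matrix such that ᵗM_i H M_i^∨ = H for all i (where ∨ denotes a fixed ring involution applied entrywise). Suppose (a) M_0 = E - e·ᵗv with image of E - M_0 spanned by a vector e; (b) the n vectors M_1^{i_1}⋯M_m^{i_m} e, (i_1,…,i_m) ∈ {0,1}^m with n = 2^m, are linearly independent; (c) the M_1,…,M_m pairwise commute; (d) ker(E - M_0) = { w : ᵗw H e^∨ = 0 }. Then the only subspaces of V invariant under all of M_0, M_1, …, M_m are 0 and V. -/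
open Matrix

/-! If an invariant subspace `W` contains some `w` with `ᵗv w ≠ 0`, then `w - M₀ w` is a nonzero
multiple of `e`, so `e ∈ W` and the vectors `M₁^{i₁}⋯Mₘ^{iₘ} e` force `W = V`. Otherwise `M₀`
fixes `W` pointwise, so by (d) `e` lies in the `H`-orthogonal of `W`. Since the `Mₖ` preserve the
form, that orthogonal is again invariant under them, hence it is all of `V`, and the
nondegeneracy of `H` gives `W = 0`. -/

variable {K n : Type*} [Field K] [Fintype n] [DecidableEq n]

namespace Submodule

def mulVecStabilizer (W : Submodule K (n → K)) : Submonoid (Matrix n n K) where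
  carrier := {A | ∀ w ∈ W, A *ᵥ w ∈ W}
  one_mem' w hw := by rwa [one_mulVec]
  mul_mem' {A B} hA hB w hw := by rw [← mulVec_mulVec]; exact hA _ (hB w hw)

variable {W : Submodule K (n → K)}

theorem exists_mem_mulVec_eq {A : Matrix n n K} (hA : IsUnit A) (hW : A ∈ W.mulVecStabilizer)
    {w : n → K} (hw : w ∈ W) : ∃ u ∈ W, A *ᵥ u = w := by
  have hinj : Function.Injective (A.mulVecLin.restrict hW) := fun a b hab =>
    Subtype.ext (mulVec_injective_iff_isUnit.mpr hA (congrArg Subtype.val hab))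
  obtain ⟨⟨u, hu⟩, huw⟩ := LinearMap.injective_iff_surjective.mp hinj ⟨w, hw⟩
  exact ⟨u, hu, congrArg Subtype.val huw⟩

theorem eq_top_of_linearIndependent_mulVec {ι : Type*} [Fintype ι] {P : ι → Matrix n n K}
    {e : n → K} (hP : LinearIndependent K fun i => P i *ᵥ e)
    (hcard : Fintype.card ι = Fintype.card n) (he : e ∈ W)
    (hW : ∀ i, P i ∈ W.mulVecStabilizer) : W = ⊤ := by
  rw [eq_top_iff, ← hP.span_eq_top_of_card_eq_finrank' (by simpa using hcard), span_le]
  rintro _ ⟨i, rfl⟩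
  exact hW i e he

end Submodule

theorem Submonoid.list_prod_ofFn_pow_mem {M : Type*} [Monoid M] (S : Submonoid M) {m : ℕ}
    {g : Fin m → M} (hg : ∀ k, g k ∈ S) (I : Fin m → ℕ) :
    (List.ofFn fun k => g k ^ I k).prod ∈ S :=
  S.list_prod_mem (List.forall_mem_ofFn_iff.mpr fun k => S.pow_mem (hg k) _)

variable (σ : K →+* K) (H : Matrix n n K)

theorem Matrix.isUnit_of_transpose_mul_mul_map_eq (hH : IsUnit H) {A : Matrix n n K}
    (hA : Aᵀ * H * A.map σ = H) : IsUnit A := by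
  rw [← isUnit_transpose]
  refine IsUnit.of_mul_eq_one (H * A.map σ * H⁻¹) ?_
  rw [← Matrix.mul_assoc, ← Matrix.mul_assoc, hA,
    mul_nonsing_inv _ ((isUnit_iff_isUnit_det H).mp hH)]

namespace Submodule

def sesqOrthogonal (W : Submodule K (n → K)) : Submodule K (n → K) where
  carrier := {y | ∀ w ∈ W, w ⬝ᵥ (H *ᵥ (σ ∘ y)) = 0}
  add_mem' {x y} hx hy w hw := by
    rw [show σ ∘ (x + y) = σ ∘ x + σ ∘ y from funext fun i => map_add σ _ _, mulVec_add,
      dotProduct_add, hx w hw, hy w hw, add_zero]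
  zero_mem' w _ := by
    rw [show σ ∘ (0 : n → K) = 0 from funext fun _ => map_zero σ, mulVec_zero, dotProduct_zero]
  smul_mem' c y hy w hw := by
    rw [show σ ∘ (c • y) = σ c • (σ ∘ y) from funext fun i => map_mul σ _ _, mulVec_smul,
      dotProduct_smul, hy w hw, smul_zero]

variable {σ H} {W : Submodule K (n → K)}

theorem mem_mulVecStabilizer_sesqOrthogonal (hH : IsUnit H) {A : Matrix n n K}
    (hA : Aᵀ * H * A.map σ = H) (hW : A ∈ W.mulVecStabilizer) :
    A ∈ (W.sesqOrthogonal σ H).mulVecStabilizer := by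
  intro y hy w hw
  obtain ⟨u, hu, rfl⟩ := exists_mem_mulVec_eq (isUnit_of_transpose_mul_mul_map_eq σ H hH hA) hW hw
  have hσA : σ ∘ (A *ᵥ y) = A.map σ *ᵥ (σ ∘ y) := funext (RingHom.map_mulVec σ A y)
  calc (A *ᵥ u) ⬝ᵥ (H *ᵥ (σ ∘ (A *ᵥ y))) = u ⬝ᵥ ((Aᵀ * H * A.map σ) *ᵥ (σ ∘ y)) := by
        rw [hσA, ← vecMul_transpose, ← dotProduct_mulVec, mulVec_mulVec, mulVec_mulVec]
    _ = 0 := by rw [hA]; exact hy u hu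

theorem eq_bot_of_sesqOrthogonal_eq_top (hH : IsUnit H) (hW : W.sesqOrthogonal σ H = ⊤) :
    W = ⊥ := by
  refine eq_bot_iff.mpr fun w hw => ?_
  have hwH : w ᵥ* H = 0 := funext fun j => by
    have h := (hW ▸ mem_top : Pi.single j 1 ∈ W.sesqOrthogonal σ H) w hw
    have hσ : σ ∘ Pi.single j (1 : K) = Pi.single j 1 := by
      ext i; simp [Pi.single_apply, apply_ite σ]
    rwa [hσ, dotProduct_mulVec, dotProduct_single, mul_one] at h
  exact vecMul_injective_iff_isUnit.mpr hH (hwH.trans (zero_vecMul H).symm)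

end Submodule

theorem irreducibility_general (m : ℕ) (σ : ℂ →+* ℂ)
    (M0 : Matrix (Fin m → Fin 2) (Fin m → Fin 2) ℂ)
    (M : Fin m → Matrix (Fin m → Fin 2) (Fin m → Fin 2) ℂ)
    (H : Matrix (Fin m → Fin 2) (Fin m → Fin 2) ℂ)
    (e v : (Fin m → Fin 2) → ℂ)
    (hH : IsUnit H)
    (hinvk : ∀ k, (M k)ᵀ * H * (M k).map σ = H)
    (ha : M0 = 1 - Matrix.vecMulVec e v)
    (hb : LinearIndependent ℂ (fun I : Fin m → Fin 2 =>
      (List.ofFn fun k => (M k) ^ (I k : ℕ)).prod *ᵥ e))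
    (hd : {w : (Fin m → Fin 2) → ℂ | M0 *ᵥ w = w}
      = {w | dotProduct w (H *ᵥ fun i => σ (e i)) = 0}) :
    ∀ W : Submodule ℂ ((Fin m → Fin 2) → ℂ),
      (∀ w ∈ W, M0 *ᵥ w ∈ W) → (∀ k, ∀ w ∈ W, M k *ᵥ w ∈ W) →
        W = ⊥ ∨ W = ⊤ := by
  intro W hW0 hWk
  have hM0w : ∀ w, M0 *ᵥ w = w - (v ⬝ᵥ w) • e := fun w => by
    rw [ha, sub_mulVec, one_mulVec, vecMulVec_mulVec, op_smul_eq_smul]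
  have hcyclic : ∀ S : Submodule ℂ ((Fin m → Fin 2) → ℂ),
      e ∈ S → (∀ k, M k ∈ S.mulVecStabilizer) → S = ⊤ := fun S he hS =>
    S.eq_top_of_linearIndependent_mulVec hb rfl he fun I =>
      S.mulVecStabilizer.list_prod_ofFn_pow_mem hS _
  by_cases hv : ∃ w ∈ W, v ⬝ᵥ w ≠ 0
  · obtain ⟨w, hw, hvw⟩ := hv
    have he : e = (v ⬝ᵥ w)⁻¹ • (w - M0 *ᵥ w) := by
      rw [hM0w, sub_sub_cancel, smul_smul, inv_mul_cancel₀ hvw, one_smul]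
    exact Or.inr (hcyclic W (he ▸ W.smul_mem _ (W.sub_mem hw (hW0 w hw))) hWk)
  · push Not at hv
    refine Or.inl (Submodule.eq_bot_of_sesqOrthogonal_eq_top hH
      (hcyclic (W.sesqOrthogonal σ H) ?_ fun k => ?_))
    · intro w hw
      exact hd.subset (show M0 *ᵥ w = w by rw [hM0w, hv w hw, zero_smul, sub_zero])
    · exact Submodule.mem_mulVecStabilizer_sesqOrthogonal hH (hinvk k) (hWk k)

/-- Irreducibility criterion abstracting the monodromy of Lauricella's `F_C`:
with `V = ℂ^(2^m)`, invertible matrices `M_0, M_1, …, M_m` preserving an invertible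
form `H` (w.r.t. an entrywise involution `σ`), `M_0 = E - e·ᵗv`, the `2^m` vectors
`M_1^{i_1}⋯M_m^{i_m}e` linearly independent, `M_1,…,M_m` commuting, and the
1-eigenspace of `M_0` equal to `{w | ᵗw H e^∨ = 0}`, every subspace invariant
under all the `M_i` is `0` or `V`. -/
theorem irreducibility (m : ℕ) (σ : ℂ →+* ℂ) (hσ : ∀ x, σ (σ x) = x)
    (M0 : Matrix (Fin m → Fin 2) (Fin m → Fin 2) ℂ)
    (M : Fin m → Matrix (Fin m → Fin 2) (Fin m → Fin 2) ℂ)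
    (H : Matrix (Fin m → Fin 2) (Fin m → Fin 2) ℂ)
    (e v : (Fin m → Fin 2) → ℂ)
    (hM0 : IsUnit M0) (hMk : ∀ k, IsUnit (M k)) (hH : IsUnit H)
    (hinv0 : M0ᵀ * H * M0.map σ = H)
    (hinvk : ∀ k, (M k)ᵀ * H * (M k).map σ = H)
    (ha : M0 = 1 - Matrix.vecMulVec e v)
    (hb : LinearIndependent ℂ (fun I : Fin m → Fin 2 =>
      (List.ofFn fun k => (M k) ^ (I k : ℕ)).prod *ᵥ e))
    (hc : ∀ k l, M k * M l = M l * M k)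
    (hd : {w : (Fin m → Fin 2) → ℂ | M0 *ᵥ w = w}
      = {w | dotProduct w (H *ᵥ fun i => σ (e i)) = 0}) :
    ∀ W : Submodule ℂ ((Fin m → Fin 2) → ℂ),
      (∀ w ∈ W, M0 *ᵥ w ∈ W) → (∀ k, ∀ w ∈ W, M k *ᵥ w ∈ W) →
        W = ⊥ ∨ W = ⊤ :=
  irreducibility_general m σ M0 M H e v hH hinvk ha hb hd
end

section
/- A simplified irreducibility criterion over ℂ: let n ≥ 1, e ∈ ℂ^n nonzero, M_0 = E - e·ᵗv with ᵗv·e ≠ 0 (so the 1-eigenspace of M_0 is the hyperplane ker ᵗv and e ∉ ker ᵗv), and let M_1,…,M_m be commuting invertible matrices such that the vectors M_1^{i_1}⋯M_m^{i_m}e, (i_1,…,i_m) ∈ {0,1}^m, span ℂ^n, and such that each M_k preserves a nondegenerate pairing B with B(M_i x, M_i y) = B(x, y) for all i = 0,…,m, and the 1-eigenspace of M_0 equals { w : B(w, e) = 0 }. Then any subspace W ⊆ ℂ^n invariant under all M_i is 0 or ℂ^n. -/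
/-!
If some `w ∈ W` has `ᵗv·w ≠ 0`, then `M_0 w - w` is a nonzero multiple of `e`, so `e ∈ W`, and `W`
contains the spanning vectors `M^I e`. Otherwise `W` lies in the 1-eigenspace of `M_0`, i.e.
`B(W, e) = 0`. Each product `P = M^I` is invertible and preserves `W`, so it permutes `W`, and
`B(P w', P e) = B(w', e) = 0` shows that `B(W, ·)` vanishes on a spanning set, hence `W = 0` by
nondegeneracy.
-/

open Matrix

namespace Matrix

variable {K : Type*} [Field K] {n : Type*} [Fintype n]

theorem eq_top_of_mem_of_span_mulVec_eq_top {ι : Type*} {W : Submodule K (n → K)}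
    {P : ι → Matrix n n K} (hP : ∀ i, ∀ w ∈ W, P i *ᵥ w ∈ W) {e : n → K}
    (hspan : Submodule.span K (Set.range fun i => P i *ᵥ e) = ⊤) (he : e ∈ W) : W = ⊤ := by
  rw [eq_top_iff, ← hspan, Submodule.span_le]
  rintro _ ⟨i, rfl⟩
  exact hP i e he

variable [DecidableEq n]

theorem one_sub_vecMulVec_mulVec_s12 {R : Type*} [CommRing R] (e v x : n → R) :
    (1 - vecMulVec e v) *ᵥ x = x - (v ⬝ᵥ x) • e := by
  rw [sub_mulVec, one_mulVec, vecMulVec_mulVec, op_smul_eq_smul]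

theorem mem_of_one_sub_vecMulVec_mulVec_mem {W : Submodule K (n → K)} {e v w : n → K}
    (hW : ∀ x ∈ W, (1 - vecMulVec e v) *ᵥ x ∈ W) (hw : w ∈ W) (hvw : v ⬝ᵥ w ≠ 0) : e ∈ W := by
  have h : (v ⬝ᵥ w) • e ∈ W := by
    simpa [one_sub_vecMulVec_mulVec_s12] using W.sub_mem hw (hW w hw)
  exact (W.smul_mem_iff hvw).mp h

theorem exists_mulVec_eq_of_isUnit {A : Matrix n n K} (hA : IsUnit A) {W : Submodule K (n → K)}
    (hW : ∀ w ∈ W, A *ᵥ w ∈ W) {w : n → K} (hw : w ∈ W) : ∃ w' ∈ W, A *ᵥ w' = w := by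
  have hinj : Function.Injective A.mulVecLin := mulVec_injective_iff_isUnit.mpr hA
  have hle : W.map A.mulVecLin ≤ W := Submodule.map_le_iff_le_comap.mpr hW
  have hmap : W.map A.mulVecLin = W :=
    Submodule.eq_of_le_of_finrank_eq hle (W.equivMapOfInjective _ hinj).finrank_eq.symm
  rw [← hmap] at hw
  obtain ⟨w', hw', rfl⟩ := hw
  exact ⟨w', hw', rfl⟩

def isometryStabilizer {S : Type*} (B : (n → K) → (n → K) → S) (W : Submodule K (n → K)) :
    Submonoid (Matrix n n K) where
  carrier := {A | IsUnit A ∧ (∀ x y, B (A *ᵥ x) (A *ᵥ y) = B x y) ∧ ∀ w ∈ W, A *ᵥ w ∈ W}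
  mul_mem' := by
    rintro A A' ⟨hu, hB, hW⟩ ⟨hu', hB', hW'⟩
    refine ⟨hu.mul hu', fun x y => ?_, fun w hw => ?_⟩
    · rw [← mulVec_mulVec, ← mulVec_mulVec, hB, hB']
    · rw [← mulVec_mulVec]
      exact hW _ (hW' w hw)
  one_mem' := ⟨isUnit_one, by simp, by simp⟩

theorem eq_bot_of_pairing_eq_zero_of_span_mulVec_eq_top {S : Type*} [Semiring S] {σ : K →+* S}
    {B : (n → K) → (n → K) → S}
    (hBadd : ∀ x y z, B x (y + z) = B x y + B x z)
    (hBsmul : ∀ (a : K) x y, B x (a • y) = σ a * B x y)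
    (hBnd : ∀ x, (∀ y, B x y = 0) → x = 0)
    {ι : Type*} {W : Submodule K (n → K)} {P : ι → Matrix n n K}
    (hP : ∀ i, P i ∈ isometryStabilizer B W) {e : n → K}
    (hspan : Submodule.span K (Set.range fun i => P i *ᵥ e) = ⊤)
    (hWe : ∀ w ∈ W, B w e = 0) : W = ⊥ := by
  refine (Submodule.eq_bot_iff W).mpr fun w hw => hBnd w fun y => ?_
  let g : (n → K) →ₛₗ[σ] S :=
    { toFun := B w
      map_add' := hBadd w
      map_smul' := fun a y => hBsmul a w y }
  suffices hg : g = 0 from LinearMap.congr_fun hg y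
  refine LinearMap.ext_on hspan ?_
  rintro _ ⟨i, rfl⟩
  obtain ⟨hunit, hiso, hinv⟩ := hP i
  obtain ⟨w', hw', rfl⟩ := exists_mulVec_eq_of_isUnit hunit hinv hw
  change B (P i *ᵥ w') (P i *ᵥ e) = 0
  rw [hiso, hWe w' hw']

end Matrix

theorem irreducibility_simple_general (n m : ℕ)
    (e v : Fin n → ℂ)
    (B : (Fin n → ℂ) → (Fin n → ℂ) → ℂ) (σ : ℂ →+* ℂ)
    (hBadd₂ : ∀ x y z, B x (y + z) = B x y + B x z)
    (hBsmul₂ : ∀ (a : ℂ) x y, B x (a • y) = σ a * B x y)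
    (hBnd₁ : ∀ x, (∀ y, B x y = 0) → x = 0)
    (M : Fin m → Matrix (Fin n) (Fin n) ℂ)
    (hMk : ∀ k, IsUnit (M k))
    (hspan : Submodule.span ℂ (Set.range fun I : Fin m → Fin 2 =>
      (List.ofFn fun k => (M k) ^ (I k : ℕ)).prod *ᵥ e) = ⊤)
    (hinvk : ∀ k, ∀ x y, B (M k *ᵥ x) (M k *ᵥ y) = B x y)
    (hd : {w : Fin n → ℂ | (1 - Matrix.vecMulVec e v) *ᵥ w = w} = {w | B w e = 0}) :
    ∀ W : Submodule ℂ (Fin n → ℂ),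
      (∀ w ∈ W, (1 - Matrix.vecMulVec e v) *ᵥ w ∈ W) →
      (∀ k, ∀ w ∈ W, M k *ᵥ w ∈ W) →
        W = ⊥ ∨ W = ⊤ := by
  intro W hW0 hWk
  have hP (I : Fin m → Fin 2) :
      (List.ofFn fun k => M k ^ (I k : ℕ)).prod ∈ isometryStabilizer B W :=
    list_prod_mem <| List.forall_mem_ofFn_iff.mpr fun k =>
      pow_mem (show M k ∈ isometryStabilizer B W from ⟨hMk k, hinvk k, hWk k⟩) _
  by_cases h : ∃ w ∈ W, v ⬝ᵥ w ≠ 0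
  · obtain ⟨w, hw, hvw⟩ := h
    exact Or.inr <| eq_top_of_mem_of_span_mulVec_eq_top (fun I => (hP I).2.2) hspan
      (mem_of_one_sub_vecMulVec_mulVec_mem hW0 hw hvw)
  · push Not at h
    refine Or.inl <| eq_bot_of_pairing_eq_zero_of_span_mulVec_eq_top hBadd₂ hBsmul₂ hBnd₁ hP hspan
      fun w hw => ?_
    have hfix : w ∈ {w : Fin n → ℂ | (1 - vecMulVec e v) *ᵥ w = w} := by
      simp [one_sub_vecMulVec_mulVec_s12, h w hw]
    rwa [hd] at hfix

/-- Simplified irreducibility criterion over `ℂ`: `M_0 = E - e·ᵗv` with `ᵗv·e ≠ 0`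
and `e ≠ 0`; `M_1,…,M_m` commuting invertible matrices whose products
`M_1^{i_1}⋯M_m^{i_m}e` span `ℂ^n`; all `M_i` preserve a nondegenerate pairing `B`
(linear in the second argument up to a ring endomorphism `σ`, covering the bilinear
and sesquilinear cases); and the 1-eigenspace of `M_0` is `{w | B(w,e) = 0}`.
Then any invariant subspace is `0` or `ℂ^n`. -/
theorem irreducibility_simple (n m : ℕ) (hn : 1 ≤ n)
    (e v : Fin n → ℂ) (he : e ≠ 0)
    (B : (Fin n → ℂ) → (Fin n → ℂ) → ℂ) (σ : ℂ →+* ℂ)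
    (hBadd₁ : ∀ x y z, B (x + y) z = B x z + B y z)
    (hBadd₂ : ∀ x y z, B x (y + z) = B x y + B x z)
    (hBsmul₁ : ∀ (a : ℂ) x y, B (a • x) y = a * B x y)
    (hBsmul₂ : ∀ (a : ℂ) x y, B x (a • y) = σ a * B x y)
    (hBnd₁ : ∀ x, (∀ y, B x y = 0) → x = 0)
    (hBnd₂ : ∀ y, (∀ x, B x y = 0) → y = 0)
    (hve : dotProduct v e ≠ 0)
    (M : Fin m → Matrix (Fin n) (Fin n) ℂ)
    (hMk : ∀ k, IsUnit (M k))
    (hc : ∀ k l, M k * M l = M l * M k)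
    (hspan : Submodule.span ℂ (Set.range fun I : Fin m → Fin 2 =>
      (List.ofFn fun k => (M k) ^ (I k : ℕ)).prod *ᵥ e) = ⊤)
    (hinv0 : ∀ x y, B ((1 - Matrix.vecMulVec e v) *ᵥ x) ((1 - Matrix.vecMulVec e v) *ᵥ y)
      = B x y)
    (hinvk : ∀ k, ∀ x y, B (M k *ᵥ x) (M k *ᵥ y) = B x y)
    (hd : {w : Fin n → ℂ | (1 - Matrix.vecMulVec e v) *ᵥ w = w} = {w | B w e = 0}) :
    ∀ W : Submodule ℂ (Fin n → ℂ),
      (∀ w ∈ W, (1 - Matrix.vecMulVec e v) *ᵥ w ∈ W) →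
      (∀ k, ∀ w ∈ W, M k *ᵥ w ∈ W) →
        W = ⊥ ∨ W = ⊤ :=
  irreducibility_simple_general n m e v B σ hBadd₂ hBsmul₂ hBnd₁ M hMk hspan hinvk hd
end
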